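/- arXiv:2511.14251 — 2 statements merged into one kernel-verified Lean document; each statement's English description precedes it below -/
import Mathlib

section
/- In the ring Z[c,y]/(c^p - 2cy, y^2 - ε c^{p-1} y), where ε = 0 if p is even and ε = 1 if p is odd, the elements 1, c, ..., c^{p-1}, y, cy, ..., c^{p-1}y form a Z-module basis; in particular the ring is a free Z-module of rank 2p+1. -/
/-!
The span of the `2p` classes `c ^ i`, `c ^ i * y` (`i < p`) contains `1` and is stable under
multiplication by `c` and by `y`, hence is the whole ring; the only relation needed beyond the
defining ones is `c ^ p * y = 0`, which holds because `c ^ p * y = 2 c y ^ 2 = 2 ε c ^ p * y` and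
`1 - 2 ε = ±1`. For linear independence, reducing each monomial `c ^ a * y ^ b` to its normal
form gives a `ℤ`-linear map `ℤ[c, y] → ℤ ^ (2p)` that kills the ideal of relations and sends
the `2p` chosen monomials to the standard basis.
-/

open MvPolynomial

/-- The cohomology ring `ℤ[c,y]/(c^p - 2cy, y^2 - ε c^(p-1) y)` of an even
(type D) quadric, where `ε = 1` iff `p` is odd; here `c = X 0`, `y = X 1`. -/
noncomputable abbrev EvenQuadricRing (p : ℕ) : Type :=
  MvPolynomial (Fin 2) ℤ ⧸
    Ideal.span {(X 0 : MvPolynomial (Fin 2) ℤ) ^ p - 2 * X 0 * X 1,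
                (X 1 : MvPolynomial (Fin 2) ℤ) ^ 2 -
                  (if p % 2 = 1 then 1 else 0) * X 0 ^ (p - 1) * X 1}

theorem Ideal.Quotient.linearIndependent_mk_of_retraction {R A ι : Type*} [CommRing R]
    [CommRing A] [Algebra R A] {I : Ideal A} {v : ι → A} (g : A →ₗ[R] ι →₀ R)
    (hgI : ∀ x ∈ I, g x = 0) (hgv : ∀ i, g (v i) = Finsupp.single i 1) :
    LinearIndependent R fun i => Ideal.Quotient.mk I (v i) := by
  rw [linearIndependent_iff]
  intro l hl
  have hmem : Finsupp.linearCombination R v l ∈ I := by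
    rw [← Ideal.Quotient.eq_zero_iff_mem]
    have := Finsupp.apply_linearCombination R (Ideal.Quotient.mkₐ R I).toLinearMap v l
    simpa [Function.comp_def, hl] using this
  have hgl := hgI _ hmem
  rw [Finsupp.apply_linearCombination, Finsupp.linearCombination_apply] at hgl
  simpa [hgv, Finsupp.smul_single_one] using hgl

theorem Submodule.eq_top_of_one_mem_of_mul_mem {R S : Type*} [CommSemiring R] [Semiring S]
    [Algebra R S] {s : Set S} (hs : Algebra.adjoin R s = ⊤) {M : Submodule R S} (h1 : 1 ∈ M)
    (hM : ∀ x ∈ s, ∀ m ∈ M, m * x ∈ M) : M = ⊤ := by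
  suffices h : ∀ x ∈ Algebra.adjoin R s, ∀ m ∈ M, m * x ∈ M by
    refine eq_top_iff.2 fun x _ => ?_
    simpa using h x (hs ▸ Algebra.mem_top) 1 h1
  intro x hx
  induction hx using Algebra.adjoin_induction with
  | mem x hx => exact hM x hx
  | algebraMap r =>
    intro m hm
    rw [← Algebra.commutes, ← Algebra.smul_def]
    exact M.smul_mem r hm
  | add x y _ _ hx hy => exact fun m hm => by rw [mul_add]; exact add_mem (hx m hm) (hy m hm)
  | mul x y _ _ hx hy => exact fun m hm => by rw [← mul_assoc]; exact hy _ (hx m hm)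

namespace EvenQuadricRing

section Relations

variable {S : Type*} [CommRing S] (p : ℕ)

def quadricFamily (c y : S) (i : Fin (2 * p)) : S :=
  if (i : ℕ) < p then c ^ (i : ℕ) else c ^ ((i : ℕ) - p) * y

theorem map_quadricFamily {T : Type*} [CommRing T] (f : S →+* T) (c y : S) (i : Fin (2 * p)) :
    f (quadricFamily p c y i) = quadricFamily p (f c) (f y) i := by
  unfold quadricFamily
  split_ifs <;> simp

variable {p} {ε : ℤ} {c y : S}

theorem pow_mul_eq_zero_of_relations (hp : 1 ≤ p) (hε : IsUnit (1 - 2 * ε))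
    (hc : c ^ p = 2 * c * y) (hy : y ^ 2 = ε * c ^ (p - 1) * y) : c ^ p * y = 0 := by
  obtain ⟨q, rfl⟩ := Nat.exists_eq_add_of_le' hp
  rw [Nat.add_sub_cancel] at hy
  have h : (1 - 2 * ε) • (c ^ (q + 1) * y) = 0 := by
    rw [zsmul_eq_mul]
    push_cast
    linear_combination y * hc + 2 * c * hy
  exact hε.smul_eq_zero.1 h

theorem pow_mul_mem_span (hp : 1 ≤ p) (hε : IsUnit (1 - 2 * ε))
    (hc : c ^ p = 2 * c * y) (hy : y ^ 2 = ε * c ^ (p - 1) * y) (a : ℕ) :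
    c ^ a * y ∈ Submodule.span ℤ (Set.range (quadricFamily p c y)) := by
  rcases lt_or_ge a p with h | h
  · exact Submodule.subset_span ⟨⟨p + a, by omega⟩, by simp [quadricFamily]⟩
  · obtain ⟨k, rfl⟩ := Nat.exists_eq_add_of_le h
    rw [pow_add, mul_assoc, mul_left_comm, pow_mul_eq_zero_of_relations hp hε hc hy, mul_zero]
    exact Submodule.zero_mem _

theorem pow_mem_span (hp : 1 ≤ p) (hε : IsUnit (1 - 2 * ε))
    (hc : c ^ p = 2 * c * y) (hy : y ^ 2 = ε * c ^ (p - 1) * y) (a : ℕ) :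
    c ^ a ∈ Submodule.span ℤ (Set.range (quadricFamily p c y)) := by
  rcases lt_or_ge a p with h | h
  · exact Submodule.subset_span ⟨⟨a, by omega⟩, by simp [quadricFamily, h]⟩
  · obtain ⟨k, rfl⟩ := Nat.exists_eq_add_of_le h
    have hck : c ^ (p + k) = (2 : ℤ) • (c ^ (k + 1) * y) := by
      rw [pow_add, hc, zsmul_eq_mul]
      push_cast
      ring
    rw [hck]
    exact Submodule.smul_mem _ _ (pow_mul_mem_span hp hε hc hy _)

theorem span_quadricFamily_eq_top (hp : 1 ≤ p) (hε : IsUnit (1 - 2 * ε))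
    (hc : c ^ p = 2 * c * y) (hy : y ^ 2 = ε * c ^ (p - 1) * y)
    (hgen : Algebra.adjoin ℤ {c, y} = ⊤) :
    Submodule.span ℤ (Set.range (quadricFamily p c y)) = ⊤ := by
  set M := Submodule.span ℤ (Set.range (quadricFamily p c y))
  have pow_mem := pow_mem_span hp hε hc hy
  have pow_mul_mem := pow_mul_mem_span hp hε hc hy
  refine Submodule.eq_top_of_one_mem_of_mul_mem hgen (by simpa using pow_mem 0) ?_
  intro x hx m hm
  refine (Submodule.span_le (p := M.comap (LinearMap.mulRight ℤ x)) |>.2 ?_) hm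
  rintro _ ⟨i, rfl⟩
  simp only [SetLike.mem_coe, Submodule.mem_comap, LinearMap.mulRight_apply, quadricFamily]
  rcases hx with rfl | hx
  · split_ifs
    · simpa [pow_succ] using pow_mem ((i : ℕ) + 1)
    · simpa [pow_succ, mul_right_comm] using pow_mul_mem ((i : ℕ) - p + 1)
  · rw [Set.mem_singleton_iff.1 hx]
    split_ifs
    · exact pow_mul_mem _
    · have hyy : c ^ ((i : ℕ) - p) * y * y = ε • (c ^ ((i : ℕ) - p + (p - 1)) * y) := by
        rw [mul_assoc, ← sq, hy, zsmul_eq_mul, pow_add]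
        ring
      rw [hyy]
      exact Submodule.smul_mem _ _ (pow_mul_mem _)

end Relations

section NormalForm

variable (p : ℕ) (ε : ℤ)

noncomputable def truncSingle (n : ℕ) (k : ℤ) : Fin (2 * p) →₀ ℤ :=
  if h : n < 2 * p then Finsupp.single ⟨n, h⟩ k else 0

variable {p} in
theorem truncSingle_val (i : Fin (2 * p)) (k : ℤ) :
    truncSingle p i k = Finsupp.single i k := by
  simp [truncSingle]

theorem truncSingle_of_le {n : ℕ} (h : 2 * p ≤ n) (k : ℤ) : truncSingle p n k = 0 :=
  dif_neg (by omega)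

theorem smul_truncSingle (n : ℕ) (k l : ℤ) :
    k • truncSingle p n l = truncSingle p n (k * l) := by
  unfold truncSingle
  split_ifs <;> simp

/-- The coordinates of `c ^ a * y ^ b` in the family `quadricFamily p c y`, read off from
`c ^ a = 2 c ^ (a - p + 1) y` and `c ^ a y = 0` for `a ≥ p`, and
`c ^ a y ^ (b + 1) = ε ^ b c ^ (a + b (p - 1)) y`. -/
noncomputable def normalForm : ℕ → ℕ → Fin (2 * p) →₀ ℤ
  | a, 0 => if a < p then truncSingle p a 1 else truncSingle p (a + 1) 2
  | a, b + 1 => truncSingle p (p + a + b * (p - 1)) (ε ^ b)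

theorem normalForm_add_left (hp : 1 ≤ p) (a b : ℕ) :
    normalForm p ε (a + p) b = (2 : ℤ) • normalForm p ε (a + 1) (b + 1) := by
  cases b with
  | zero =>
    simp only [normalForm, if_neg (show ¬ a + p < p by omega), smul_truncSingle]
    congr 1 <;> ring
  | succ b =>
    have h : (b + 1) * (p - 1) = b * (p - 1) + (p - 1) := add_one_mul _ _
    simp only [normalForm]
    rw [truncSingle_of_le _ (by omega), truncSingle_of_le _ (by omega), smul_zero]

theorem normalForm_add_two (a b : ℕ) :
    normalForm p ε a (b + 2) = ε • normalForm p ε (a + (p - 1)) (b + 1) := by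
  simp only [normalForm, smul_truncSingle, ← pow_succ']
  congr 1
  ring

noncomputable def coords : MvPolynomial (Fin 2) ℤ →ₗ[ℤ] Fin (2 * p) →₀ ℤ :=
  (basisMonomials (Fin 2) ℤ).constr ℤ fun m => normalForm p ε (m 0) (m 1)

theorem coords_X_pow_mul_X_pow (a b : ℕ) :
    coords p ε (X 0 ^ a * X 1 ^ b) = normalForm p ε a b := by
  have h := (basisMonomials (Fin 2) ℤ).constr_basis ℤ (fun m => normalForm p ε (m 0) (m 1))
    (Finsupp.single 0 a + Finsupp.single 1 b)
  simpa [coords, coe_basisMonomials, monomial_fin_two] using h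

theorem coords_mul_eq_zero {r : MvPolynomial (Fin 2) ℤ}
    (h : ∀ a b, coords p ε (X 0 ^ a * X 1 ^ b * r) = 0) (q : MvPolynomial (Fin 2) ℤ) :
    coords p ε (q * r) = 0 := by
  induction q using MvPolynomial.induction_on' with
  | monomial m k =>
    rw [monomial_fin_two, mul_assoc (C k), mul_assoc, C_mul', map_smul, h, smul_zero]
  | add q q' hq hq' => rw [add_mul, map_add, hq, hq', add_zero]

theorem coords_eq_zero_of_mem (hp : 1 ≤ p) {x : MvPolynomial (Fin 2) ℤ}
    (hx : x ∈ Ideal.span {X 0 ^ p - 2 * X 0 * X 1,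
      X 1 ^ 2 - (ε : MvPolynomial (Fin 2) ℤ) * X 0 ^ (p - 1) * X 1}) :
    coords p ε x = 0 := by
  obtain ⟨u, v, rfl⟩ := Ideal.mem_span_pair.1 hx
  rw [map_add, coords_mul_eq_zero, coords_mul_eq_zero, add_zero]
  · intro a b
    have hr : X 0 ^ a * X 1 ^ b *
          (X 1 ^ 2 - (ε : MvPolynomial (Fin 2) ℤ) * X 0 ^ (p - 1) * X 1) =
        X 0 ^ a * X 1 ^ (b + 2) - ε • (X 0 ^ (a + (p - 1)) * X 1 ^ (b + 1)) := by
      rw [zsmul_eq_mul]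
      ring
    rw [hr, map_sub, map_smul, coords_X_pow_mul_X_pow, coords_X_pow_mul_X_pow,
      normalForm_add_two, sub_self]
  · intro a b
    have hr : X 0 ^ a * X 1 ^ b * (X 0 ^ p - 2 * X 0 * X 1 : MvPolynomial (Fin 2) ℤ) =
        X 0 ^ (a + p) * X 1 ^ b - (2 : ℤ) • (X 0 ^ (a + 1) * X 1 ^ (b + 1)) := by
      rw [zsmul_eq_mul]
      push_cast
      ring
    rw [hr, map_sub, map_smul, coords_X_pow_mul_X_pow, coords_X_pow_mul_X_pow,
      normalForm_add_left _ _ hp, sub_self]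

theorem coords_quadricFamily (i : Fin (2 * p)) :
    coords p ε (quadricFamily p (X 0) (X 1) i) = Finsupp.single i 1 := by
  unfold quadricFamily
  split_ifs with h
  · rw [← mul_one (X 0 ^ _), ← pow_zero (X 1), coords_X_pow_mul_X_pow]
    simp only [normalForm, if_pos h, truncSingle_val]
  · rw [← pow_one (X 1), coords_X_pow_mul_X_pow]
    simp only [normalForm]
    rw [show p + ((i : ℕ) - p) + 0 * (p - 1) = i by omega, pow_zero, truncSingle_val]

end NormalForm

def eps (p : ℕ) : ℤ := if p % 2 = 1 then 1 else 0

theorem ite_eq_intCast_eps {R : Type*} [Ring R] (p : ℕ) :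
    (if p % 2 = 1 then 1 else 0 : R) = (eps p : R) := by
  unfold eps
  split_ifs <;> simp

theorem isUnit_one_sub_two_mul_eps (p : ℕ) : IsUnit (1 - 2 * eps p) := by
  unfold eps
  split_ifs <;> simp

variable (p : ℕ)

theorem mk_X_zero_pow :
    (Ideal.Quotient.mk _ (X 0) : EvenQuadricRing p) ^ p =
      2 * Ideal.Quotient.mk _ (X 0) * Ideal.Quotient.mk _ (X 1) := by
  have h : (Ideal.Quotient.mk _ (X 0 ^ p - 2 * X 0 * X 1) : EvenQuadricRing p) = 0 :=
    Ideal.Quotient.eq_zero_iff_mem.2 (Ideal.subset_span (by simp))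
  rw [← sub_eq_zero]
  simpa [map_ofNat] using h

theorem mk_X_one_sq :
    (Ideal.Quotient.mk _ (X 1) : EvenQuadricRing p) ^ 2 =
      (eps p : EvenQuadricRing p) * Ideal.Quotient.mk _ (X 0) ^ (p - 1) *
        Ideal.Quotient.mk _ (X 1) := by
  have h : (Ideal.Quotient.mk _ (X 1 ^ 2 - (if p % 2 = 1 then 1 else 0) * X 0 ^ (p - 1) * X 1) :
      EvenQuadricRing p) = 0 :=
    Ideal.Quotient.eq_zero_iff_mem.2 (Ideal.subset_span (by simp))
  rw [← sub_eq_zero]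
  simpa [ite_eq_intCast_eps] using h

theorem adjoin_mk_X :
    Algebra.adjoin ℤ
      {(Ideal.Quotient.mk _ (X 0) : EvenQuadricRing p), Ideal.Quotient.mk _ (X 1)} = ⊤ := by
  refine Algebra.eq_top_iff.2 fun x => ?_
  obtain ⟨q, rfl⟩ := Ideal.Quotient.mk_surjective x
  induction q using MvPolynomial.induction_on with
  | C a => simp
  | add q q' hq hq' => rw [map_add]; exact add_mem hq hq'
  | mul_X q i hq =>
    rw [map_mul]
    exact mul_mem hq (Algebra.subset_adjoin (by fin_cases i <;> simp))

end EvenQuadricRing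

/-- In `ℤ[c,y]/(c^p - 2cy, y^2 - ε c^(p-1) y)` (with `ε = 1` iff `p` odd),
the elements `1, c, …, c^(p-1), y, cy, …, c^(p-1) y` form a ℤ-module basis;
in particular the ring is a free ℤ-module. -/
theorem stmt1 (p : ℕ) (hp : 2 ≤ p) :
    ∃ B : Module.Basis (Fin (2 * p)) ℤ (EvenQuadricRing p),
      ∀ i : Fin (2 * p),
        B i = Ideal.Quotient.mk _
          (if (i : ℕ) < p then (X 0 : MvPolynomial (Fin 2) ℤ) ^ (i : ℕ)
           else (X 0 : MvPolynomial (Fin 2) ℤ) ^ ((i : ℕ) - p) * X 1) := by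
  open EvenQuadricRing in
  have hli := Ideal.Quotient.linearIndependent_mk_of_retraction (coords p (eps p))
    (fun x hx => coords_eq_zero_of_mem p (eps p) (by omega) (by rwa [← ite_eq_intCast_eps]))
    (coords_quadricFamily p (eps p))
  have hsp := span_quadricFamily_eq_top (by omega) (isUnit_one_sub_two_mul_eps p)
    (mk_X_zero_pow p) (mk_X_one_sq p) (adjoin_mk_X p)
  refine ⟨Module.Basis.mk hli ?_, fun i => Module.Basis.mk_apply _ _ _⟩
  simpa [map_quadricFamily] using hsp.ge
end

section
/- In the ring Z[c,y]/(c^p - 2cy, y^2 - ε c^{p-1}y) with ε ≡ p mod 2 in {0,1}, the element c is nilpotent with c^{2p-1} = 0; moreover c^{2p-2} = 2 c^{p-1} y ≠ 0 when p is even, and c^{2p-2} ≠ 0 when p is odd. -/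
/-! `c^(2p-1) = c^(p-1) · 2cy = 4cy²`, and `cy² = ε c^p y = 2ε cy²` vanishes because `ε` is
idempotent. For `c^(2p-2) ≠ 0`, a relation `X₀^(2p-2) = a f + b g` in `ℤ[X₀, X₁]` is restricted to
the line `X₀ = 0`, which gives `b(0,0) = 0`, and to the curve `X₁ = X₀^(p-1)/2` in `ℚ[t]`, on which
`f` vanishes and the relation becomes `t^(2p-2) = b (1/4 - e/2) t^(2p-2)`; cancelling `t^(2p-2)` and
setting `t = 0` gives `1 = 0`. -/

open MvPolynomial

lemma MvPolynomial.eval_zero_aeval {σ R S : Type*} [CommSemiring R] [CommSemiring S] [Algebra R S]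
    {v : σ → Polynomial S} (hv : ∀ i, (v i).eval 0 = 0) (p : MvPolynomial σ R) :
    (aeval v p).eval 0 = algebraMap R S (constantCoeff p) := by
  rw [← Polynomial.coe_evalRingHom, map_aeval]
  simp [hv]

lemma X_zero_pow_notMem_span (n : ℕ) (e : MvPolynomial (Fin 2) ℤ) :
    (X 0 : MvPolynomial (Fin 2) ℤ) ^ (2 * n + 2) ∉
      Ideal.span {X 0 ^ (n + 2) - 2 * X 0 * X 1, X 1 ^ 2 - e * X 0 ^ (n + 1) * X 1} := by
  rw [Ideal.mem_span_pair]
  rintro ⟨a, b, hab⟩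
  have hb : constantCoeff b = 0 := by
    let v : Fin 2 → Polynomial ℤ := ![0, Polynomial.X]
    have h : aeval v b = 0 := by simpa [v] using congrArg (aeval v) hab
    simpa [h] using (eval_zero_aeval (v := v) (by simp [v, Fin.forall_fin_two]) b).symm
  set t : Polynomial ℚ := Polynomial.X
  set u : Polynomial ℚ := Polynomial.C 2⁻¹
  have hu : 2 * u = 1 := by simp [u, ← Polynomial.C_ofNat, ← Polynomial.C_mul]
  set v : Fin 2 → Polynomial ℚ := ![t, u * t ^ (n + 1)]
  have h := congrArg (aeval v) hab
  simp only [map_add, map_mul, map_sub, map_pow, map_ofNat, aeval_X, v, Matrix.cons_val_zero,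
    Matrix.cons_val_one] at h
  have hcurve : t ^ (2 * n + 2) * (1 - aeval v b * (u ^ 2 - aeval v e * u)) = 0 := by
    linear_combination -h - aeval v a * t ^ (n + 2) * hu
  have hunit : aeval v b * (u ^ 2 - aeval v e * u) = 1 :=
    (sub_eq_zero.mp ((mul_eq_zero.mp hcurve).resolve_left (pow_ne_zero _ Polynomial.X_ne_zero))).symm
  have heval := congrArg (Polynomial.eval 0) hunit
  rw [Polynomial.eval_mul, eval_zero_aeval (by simp [v, t, Fin.forall_fin_two]), hb] at heval
  simp at heval

section QuadricRelations

variable {R : Type*} [CommRing R] {c y ε : R} {n : ℕ}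

theorem mul_sq_eq_zero_of_quadric (hε : IsIdempotentElem ε) (hc : c ^ (n + 1) = 2 * c * y)
    (hy : y ^ 2 = ε * c ^ n * y) : c * y ^ 2 = 0 := by
  linear_combination (1 - 2 * ε) * (c * hy + ε * y * hc) - 4 * c * y ^ 2 * hε.eq

theorem pow_two_mul_add_one_eq_zero_of_quadric (hε : IsIdempotentElem ε)
    (hc : c ^ (n + 1) = 2 * c * y) (hy : y ^ 2 = ε * c ^ n * y) : c ^ (2 * n + 1) = 0 := by
  linear_combination (c ^ n + 2 * y) * hc + 4 * mul_sq_eq_zero_of_quadric hε hc hy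

end QuadricRelations

/-- In `ℤ[c,y]/(c^p - 2cy, y² - ε c^(p-1) y)` with `ε ≡ p (mod 2)` in `{0,1}`,
the element `c` is nilpotent with `c^(2p-1) = 0`; moreover
`c^(2p-2) = 2 c^(p-1) y ≠ 0` when `p` is even, and `c^(2p-2) ≠ 0` when `p` is
odd. -/
theorem stmt15 (p : ℕ) (hp : 2 ≤ p) :
    let I := Ideal.span {(X 0 : MvPolynomial (Fin 2) ℤ) ^ p - 2 * X 0 * X 1,
      (X 1 : MvPolynomial (Fin 2) ℤ) ^ 2 -
        (if p % 2 = 1 then 1 else 0) * X 0 ^ (p - 1) * X 1}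
    let c := Ideal.Quotient.mk I (X 0 : MvPolynomial (Fin 2) ℤ)
    let y := Ideal.Quotient.mk I (X 1 : MvPolynomial (Fin 2) ℤ)
    IsNilpotent c ∧ c ^ (2 * p - 1) = 0 ∧
    (Even p → c ^ (2 * p - 2) = 2 * c ^ (p - 1) * y ∧ c ^ (2 * p - 2) ≠ 0) ∧
    (Odd p → c ^ (2 * p - 2) ≠ 0) := by
  obtain ⟨n, rfl⟩ : ∃ n, p = n + 2 := ⟨p - 2, by omega⟩
  intro I c y
  set ε := Ideal.Quotient.mk I (if (n + 2) % 2 = 1 then 1 else 0)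
  have hε : IsIdempotentElem ε := by
    refine IsIdempotentElem.map ?_ (Ideal.Quotient.mk I)
    split_ifs <;> simp [IsIdempotentElem]
  have hc : c ^ (n + 2) = 2 * c * y := by
    have h : X 0 ^ (n + 2) - 2 * X 0 * X 1 ∈ I := Ideal.subset_span (Set.mem_insert _ _)
    simpa only [map_mul, map_pow, map_ofNat] using (Ideal.Quotient.mk_eq_mk_iff_sub_mem _ _).mpr h
  have hy : y ^ 2 = ε * c ^ (n + 1) * y := by
    have h : X 1 ^ 2 - (if (n + 2) % 2 = 1 then 1 else 0) * X 0 ^ (n + 1) * X 1 ∈ I :=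
      Ideal.subset_span (Set.mem_insert_of_mem _ rfl)
    simpa only [map_mul, map_pow] using (Ideal.Quotient.mk_eq_mk_iff_sub_mem _ _).mpr h
  have hnil : c ^ (2 * (n + 1) + 1) = 0 := pow_two_mul_add_one_eq_zero_of_quadric hε hc hy
  have htop : c ^ (2 * n + 2) = 2 * c ^ (n + 1) * y := by linear_combination c ^ n * hc
  have hne : c ^ (2 * n + 2) ≠ 0 := fun h ↦ X_zero_pow_notMem_span n _
    (Ideal.Quotient.eq_zero_iff_mem.mp (by rwa [map_pow]))
  rw [show 2 * (n + 2) - 1 = 2 * (n + 1) + 1 by omega, show 2 * (n + 2) - 2 = 2 * n + 2 by omega]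
  exact ⟨⟨_, hnil⟩, hnil, fun _ ↦ ⟨htop, hne⟩, fun _ ↦ hne⟩
end
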